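/- arXiv:1409.2630 — 6 statements merged into one kernel-verified Lean document; each statement's English description precedes it below -/
import Mathlib

section
/- Let X be a separable Banach space over ℂ and (T_n)_{n≥1} a sequence of bounded linear operators on X. Then (T_n) is topologically transitive if and only if J_{(T_n)}(x) = X for every x ∈ X. -/
open Filter Topology

variable {X : Type*} [NormedAddCommGroup X] [NormedSpace ℂ X] [CompleteSpace X]
  [TopologicalSpace.SeparableSpace X]

/-- The extended limit set `J_{(T_n)}(x)`: all `y` such that there exist a strictly
increasing sequence of positive integers `(k_n)` and a sequence `(x_n)` with
`x_n → x` and `T_{k_n} x_n → y`. -/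
def extLimitSet (T : ℕ → X →L[ℂ] X) (x : X) : Set X :=
  {y | ∃ k : ℕ → ℕ, StrictMono k ∧ (∀ n, 0 < k n) ∧
    ∃ u : ℕ → X, Tendsto u atTop (𝓝 x) ∧
      Tendsto (fun n => T (k n) (u n)) atTop (𝓝 y)}

/-- The sequence `(T_n)_{n≥1}` is topologically transitive. -/
def TopTransitiveSeq (T : ℕ → X →L[ℂ] X) : Prop :=
  ∀ U V : Set X, IsOpen U → IsOpen V → U.Nonempty → V.Nonempty →
    ∃ n : ℕ, 0 < n ∧ (T n '' U ∩ V).Nonempty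

/-
If transitivity only produced bounded indices `n ≤ N`, pick `x ∈ U` and `y' ∈ V` different from
the finitely many points `T₀ x, …, T_N x` (possible since `V` is infinite in a space without
isolated points). By continuity some open `U' × V' ∋ (x, y')` inside `U × V` still avoids the
graphs of `T₀, …, T_N`, so transitivity applied to `U', V'` must use an index `n > N`.
Hence every pair of open sets is hit by infinitely many `T_n`; a diagonal extraction along
countable neighbourhood bases of `x` and `y` then produces the sequences `k_n` and `x_n`.
-/

section Topological

variable {Y : Type*} [TopologicalSpace Y] {T : ℕ → Y → Y}

theorem frequently_image_inter_nonempty_of_transitive [T2Space Y] [∀ y : Y, (𝓝[≠] y).NeBot]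
    (hT : ∀ n, Continuous (T n))
    (htrans : ∀ U V : Set Y, IsOpen U → IsOpen V → U.Nonempty → V.Nonempty →
      ∃ n, (T n '' U ∩ V).Nonempty)
    {U V : Set Y} (hU : IsOpen U) (hV : IsOpen V) (hUne : U.Nonempty) (hVne : V.Nonempty) :
    ∃ᶠ n in atTop, (T n '' U ∩ V).Nonempty := by
  obtain ⟨x, hx⟩ := hUne
  obtain ⟨y, hy⟩ := hVne
  refine frequently_atTop.2 fun N => ?_
  obtain ⟨y', hy'V, hy'⟩ := ((infinite_of_mem_nhds y (hV.mem_nhds hy)).sdiff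
    ((Set.finite_Iic N).image fun n => T n x)).nonempty
  have hy'_ne : ∀ n ∈ Set.Iic N, T n x ≠ y' := fun n hn h => hy' ⟨n, hn, h⟩
  have hsep : ∀ᶠ p in 𝓝 (x, y'), (p.1 ∈ U ∧ p.2 ∈ V) ∧ ∀ n ∈ Set.Iic N, T n p.1 ≠ p.2 := by
    refine Eventually.and ((hU.prod hV).mem_nhds (Set.mk_mem_prod hx hy'V))
      ((eventually_all_finite (Set.finite_Iic N)).2 fun n hn => ?_)
    exact (isOpen_ne_fun ((hT n).comp continuous_fst) continuous_snd).mem_nhds (hy'_ne n hn)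
  obtain ⟨U', V', hU', hxU', hV', hyV', hsub⟩ := mem_nhds_prod_iff'.1 hsep
  obtain ⟨n, _, ⟨z, hz, rfl⟩, hzV'⟩ := htrans U' V' hU' hV' ⟨x, hxU'⟩ ⟨y', hyV'⟩
  obtain ⟨⟨hzU, hTzV⟩, hne⟩ := hsub (Set.mk_mem_prod hz hzV')
  exact ⟨n, le_of_not_ge fun hn => hne n hn rfl, _, ⟨z, hzU, rfl⟩, hTzV⟩

theorem exists_strictMono_tendsto_of_frequently [FirstCountableTopology Y] {x y : Y}
    (h : ∀ U V : Set Y, IsOpen U → IsOpen V → x ∈ U → y ∈ V →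
      ∃ᶠ n in atTop, (T n '' U ∩ V).Nonempty) :
    ∃ k : ℕ → ℕ, StrictMono k ∧ (∀ n, 0 < k n) ∧ ∃ u : ℕ → Y, Tendsto u atTop (𝓝 x) ∧
      Tendsto (fun n => T (k n) (u n)) atTop (𝓝 y) := by
  obtain ⟨s, hs⟩ := (𝓝 x).exists_antitone_basis
  obtain ⟨t, ht⟩ := (𝓝 y).exists_antitone_basis
  have hfreq : ∀ m, ∃ᶠ n in atTop,
      (T n '' interior (s m) ∩ interior (t m)).Nonempty ∧ 0 < n := fun m =>
    (h _ _ isOpen_interior isOpen_interior (mem_interior_iff_mem_nhds.2 (hs.mem m))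
      (mem_interior_iff_mem_nhds.2 (ht.mem m))).and_eventually (eventually_gt_atTop 0)
  obtain ⟨k, hk, hkP⟩ := extraction_forall_of_frequently hfreq
  choose u hu using fun m => Set.image_inter_nonempty_iff.1 (hkP m).1
  exact ⟨k, hk, fun m => (hkP m).2, u, hs.tendsto fun m => interior_subset (hu m).1,
    ht.tendsto fun m => interior_subset (hu m).2⟩

end Topological

theorem TopTransitiveSeq.frequently_image_inter_nonempty {E : Type*} [NormedAddCommGroup E]
    [NormedSpace ℂ E] {T : ℕ → E →L[ℂ] E}
    (hT : TopTransitiveSeq T) {U V : Set E} (hU : IsOpen U) (hV : IsOpen V)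
    (hUne : U.Nonempty) (hVne : V.Nonempty) :
    ∃ᶠ n in atTop, (T n '' U ∩ V).Nonempty := by
  rcases subsingleton_or_nontrivial E with hE | hE
  · obtain ⟨x, hx⟩ := hUne
    obtain ⟨y, hy⟩ := hVne
    exact Frequently.of_forall fun n => ⟨y, ⟨x, hx, Subsingleton.elim _ _⟩, hy⟩
  · exact frequently_image_inter_nonempty_of_transitive (fun n => (T n).continuous)
      (fun U V hU hV hUne hVne => (hT U V hU hV hUne hVne).imp fun _ => And.right) hU hV hUne hVne

theorem stmt2 (T : ℕ → X →L[ℂ] X) :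
    TopTransitiveSeq T ↔ ∀ x : X, extLimitSet T x = Set.univ := by
  refine ⟨fun hT x => Set.eq_univ_of_forall fun y => ?_, fun h U V hU hV ⟨x, hx⟩ ⟨y, hy⟩ => ?_⟩
  · exact exists_strictMono_tendsto_of_frequently fun U V hU hV hxU hyV =>
      hT.frequently_image_inter_nonempty hU hV ⟨x, hxU⟩ ⟨y, hyV⟩
  · obtain ⟨k, -, hk, u, hu, hTu⟩ : y ∈ extLimitSet T x := h x ▸ Set.mem_univ y
    obtain ⟨n, hun, hTun⟩ :=
      ((hu.eventually (hU.mem_nhds hx)).and (hTu.eventually (hV.mem_nhds hy))).exists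
    exact ⟨k n, hk n, _, ⟨u n, hun, rfl⟩, hTun⟩
end

section
/- Let X be a separable Banach space over ℂ and (T_n)_{n≥1} a sequence of bounded linear operators on X. Suppose (x_k) and (y_k) are sequences in X with x_k → x and y_k → y for some x, y ∈ X. If y_k ∈ J_{(T_n)}(x_k) for every k = 1, 2, 3, ..., then y ∈ J_{(T_n)}(x). -/
open Filter Topology

variable {X : Type*} [NormedAddCommGroup X] [NormedSpace ℂ X] [CompleteSpace X]
  [TopologicalSpace.SeparableSpace X]

/-! `y ∈ J(x)` says exactly that `(x, y)` lies in the Kuratowski upper limit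
`⋂ N, closure (⋃ n > N, graph (T n))` of the graphs of the `T n` (by a diagonal extraction along
a countable neighbourhood basis of `(x, y)`). That set is closed, being an intersection of
closures, so it contains the limit `(x, y)` of the points `(u k, v k)`. -/

open Set

section LimsupGraph

variable {α β : Type*} [TopologicalSpace α] [TopologicalSpace β] {f : ℕ → α → β}

def limsupGraph (f : ℕ → α → β) : Set (α × β) :=
  ⋂ N, closure (⋃ n > N, range fun z => (z, f n z))

theorem isClosed_limsupGraph : IsClosed (limsupGraph f) :=
  isClosed_iInter fun _ => isClosed_closure

theorem mem_limsupGraph_of_tendsto {k : ℕ → ℕ} (hk : StrictMono k) {u : ℕ → α}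
    {p : α × β} (h : Tendsto (fun n => (u n, f (k n) (u n))) atTop (𝓝 p)) : p ∈ limsupGraph f :=
  mem_iInter.2 fun N => mem_closure_of_tendsto h <|
    (hk.tendsto_atTop.eventually_gt_atTop N).mono fun n hn =>
      mem_iUnion₂.2 ⟨k n, hn, mem_range_self _⟩

theorem exists_seq_of_mem_limsupGraph [FirstCountableTopology α] [FirstCountableTopology β]
    {p : α × β} (hp : p ∈ limsupGraph f) :
    ∃ k : ℕ → ℕ, StrictMono k ∧ (∀ n, 0 < k n) ∧
      ∃ u : ℕ → α, Tendsto (fun n => (u n, f (k n) (u n))) atTop (𝓝 p) := by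
  obtain ⟨U, hU⟩ := (𝓝 p).exists_antitone_basis
  have hfreq : ∀ m, ∃ᶠ n in atTop, 0 < n ∧ ∃ z, (z, f n z) ∈ U m := by
    intro m
    refine frequently_atTop.2 fun N => ?_
    obtain ⟨q, hqU, hq⟩ := mem_closure_iff_nhds.1 (mem_iInter.1 hp N) (U m) (hU.mem m)
    obtain ⟨n, hn, z, rfl⟩ := mem_iUnion₂.1 hq
    exact ⟨n, hn.le, N.zero_le.trans_lt hn, z, hqU⟩
  obtain ⟨k, hk, hkU⟩ := extraction_forall_of_frequently hfreq
  choose hpos u hu using hkU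
  exact ⟨k, hk, hpos, u, hU.tendsto hu⟩

end LimsupGraph

theorem mem_extLimitSet_iff {E : Type*} [NormedAddCommGroup E] [NormedSpace ℂ E]
    {T : ℕ → E →L[ℂ] E} {x y : E} :
    y ∈ extLimitSet T x ↔ (x, y) ∈ limsupGraph fun n => T n := by
  constructor
  · rintro ⟨k, hk, -, u, hu, hTu⟩
    exact mem_limsupGraph_of_tendsto hk (hu.prodMk_nhds hTu)
  · intro hxy
    obtain ⟨k, hk, hpos, u, hu⟩ := exists_seq_of_mem_limsupGraph hxy
    exact ⟨k, hk, hpos, u, hu.fst_nhds, hu.snd_nhds⟩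

theorem stmt3 (T : ℕ → X →L[ℂ] X) (x y : X) (u v : ℕ → X)
    (hu : Tendsto u atTop (𝓝 x)) (hv : Tendsto v atTop (𝓝 y))
    (h : ∀ k : ℕ, v k ∈ extLimitSet T (u k)) :
    y ∈ extLimitSet T x := by
  simp only [mem_extLimitSet_iff] at h ⊢
  exact isClosed_limsupGraph.mem_of_tendsto (hu.prodMk_nhds hv) (Eventually.of_forall h)
end

section
/- Let X be a separable Banach space over ℂ and (T_n)_{n≥1} a sequence of bounded linear operators on X such that T_n → T uniformly on X (i.e., in operator norm) for some bounded linear operator T on X. Let x, y ∈ X. If T_n y ∈ J_{(T_n)}(T_n x) for every n = 1, 2, 3, ..., then T y ∈ J_{(T_n)}(T x). -/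
open Filter Topology

variable {X : Type*} [NormedAddCommGroup X] [NormedSpace ℂ X] [CompleteSpace X]
  [TopologicalSpace.SeparableSpace X]

/-! The extended limit set `J(x)` is the set of `y` such that `(x, y)` is a cluster point of
`(k, w) ↦ (w, T k w)` as `k → ∞` (with `w` unrestricted). Cluster sets are closed, so the graph
`{(x, y) | y ∈ J(x)}` is closed in `X × X`; since `T n → S` in norm, the points
`(T n x, T n y)` of this graph converge to `(S x, S y)`. -/

section

variable {E : Type*} [NormedAddCommGroup E] [NormedSpace ℂ E]

theorem mem_extLimitSet_iff_mapClusterPt (T : ℕ → E →L[ℂ] E) (x y : E) :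
    y ∈ extLimitSet T x ↔
      MapClusterPt (x, y) (atTop ×ˢ ⊤) (fun p : ℕ × E => (p.2, T p.1 p.2)) := by
  constructor
  · rintro ⟨k, hk, -, u, hu, hTu⟩
    exact .of_comp (hk.tendsto_atTop.prodMk tendsto_top) (hu.prodMk_nhds hTu).mapClusterPt
  · intro hxy
    obtain ⟨ψ, hψxy, hψ⟩ := hxy.exists_seq_tendsto
    obtain ⟨φ, hφ, hkφ⟩ := strictMono_subseq_of_tendsto_atTop (tendsto_fst.comp hψ)
    -- dropping the first index of the extraction makes the indices positive
    refine ⟨fun n => (ψ (φ (n + 1))).1, hkφ.comp fun _ _ => Nat.succ_lt_succ,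
      fun n => (Nat.zero_le _).trans_lt (hkφ n.succ_pos), fun n => (ψ (φ (n + 1))).2,
      (Prod.tendsto_iff _ _).1 ((hψxy.comp hφ.tendsto_atTop).comp (tendsto_add_atTop_nat 1))⟩

theorem isClosed_setOf_mem_extLimitSet (T : ℕ → E →L[ℂ] E) :
    IsClosed {p : E × E | p.2 ∈ extLimitSet T p.1} := by
  simp only [mem_extLimitSet_iff_mapClusterPt]
  exact isClosed_setOfPred_clusterPt

end

theorem stmt4 (T : ℕ → X →L[ℂ] X) (S : X →L[ℂ] X)
    (hconv : Tendsto T atTop (𝓝 S)) (x y : X)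
    (h : ∀ n : ℕ, 0 < n → T n y ∈ extLimitSet T (T n x)) :
    S y ∈ extLimitSet T (S x) :=
  (isClosed_setOf_mem_extLimitSet T).mem_of_tendsto
    ((((continuous_eval_const x).tendsto S).comp hconv).prodMk_nhds
      (((continuous_eval_const y).tendsto S).comp hconv))
    ((eventually_gt_atTop 0).mono h)
end

section
/- Let X be a separable Banach space over ℂ and (T_n)_{n≥1} a sequence of bounded linear operators on X. Then the set A = {x ∈ X : J_{(T_n)}(x) = X} is closed and connected. -/
/-!
By a diagonal extraction, `y ∈ J(x)` says exactly that for every `ε > 0` there are arbitrarily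
large `k` and `u` with `‖u - x‖ < ε` and `‖T_k u - y‖ < ε`; this condition is closed in `x`, so
`A` is closed. Linearity gives `J(c x) = c J(x)` for `c ≠ 0`, so `A` is a closed cone: if it is
nonempty it contains `0 = lim x / n`, and it is then star-shaped about `0`.
-/

open Filter Topology

variable {X : Type*} [NormedAddCommGroup X] [NormedSpace ℂ X] [CompleteSpace X]
  [TopologicalSpace.SeparableSpace X]

section Cone

variable {E : Type*} [AddCommGroup E] [Module ℝ E] [TopologicalSpace E] [ContinuousSMul ℝ E]
  {s : Set E}

theorem IsClosed.zero_mem_of_smul_mem (hs : IsClosed s)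
    (hsmul : ∀ x ∈ s, ∀ t : ℝ, 0 < t → t • x ∈ s) (hne : s.Nonempty) : (0 : E) ∈ s := by
  obtain ⟨x, hx⟩ := hne
  have hlim : Tendsto (fun t : ℝ => t • x) (𝓝[>] 0) (𝓝 0) := by
    simpa using ((tendsto_id (x := 𝓝 (0 : ℝ))).mono_left
      (nhdsWithin_le_nhds (s := Set.Ioi 0))).smul_const x
  exact hs.mem_of_tendsto hlim (eventually_nhdsWithin_of_forall fun t ht => hsmul x hx t ht)

theorem IsClosed.isPreconnected_of_smul_mem [IsTopologicalAddGroup E] (hs : IsClosed s)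
    (hsmul : ∀ x ∈ s, ∀ t : ℝ, 0 < t → t • x ∈ s) : IsPreconnected s := by
  rcases s.eq_empty_or_nonempty with rfl | hne
  · exact isPreconnected_empty
  have hstar : StarConvex ℝ 0 s := by
    intro y hy a b _ hb _
    rw [smul_zero, zero_add]
    rcases hb.eq_or_lt with rfl | hb
    · rw [zero_smul]
      exact hs.zero_mem_of_smul_mem hsmul hne
    · exact hsmul y hy b hb
  exact (hstar.isPathConnected (hs.zero_mem_of_smul_mem hsmul hne)).isConnected.isPreconnected

end Cone

section ExtLimitSet

variable {E : Type*} [NormedAddCommGroup E] [NormedSpace ℂ E] (T : ℕ → E →L[ℂ] E) {x y : E}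

theorem mem_extLimitSet_iff_s10 :
    y ∈ extLimitSet T x ↔ ∀ ε > 0, ∃ᶠ k in atTop, ∃ u, dist u x < ε ∧ dist (T k u) y < ε := by
  constructor
  · rintro ⟨k, hk, -, u, hu, hTu⟩ ε hε
    have hclose : ∀ᶠ n in atTop, dist (u n) x < ε ∧ dist (T (k n) (u n)) y < ε :=
      (Metric.tendsto_nhds.1 hu ε hε).and (Metric.tendsto_nhds.1 hTu ε hε)
    exact hk.tendsto_atTop.frequently (hclose.frequently.mono fun n hn => ⟨u n, hn⟩)
  · intro h
    have hfreq : ∀ n : ℕ, ∃ᶠ k in atTop,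
        (∃ u, dist u x < 1 / (n + 1) ∧ dist (T k u) y < 1 / (n + 1)) ∧ 0 < k :=
      fun n => (h _ Nat.one_div_pos_of_nat).and_eventually (eventually_gt_atTop 0)
    obtain ⟨φ, hφ, hP⟩ := extraction_forall_of_frequently hfreq
    choose u hu using fun n => (hP n).1
    have lim_of_dist_lt {v : ℕ → E} {z : E} (hv : ∀ n, dist (v n) z < 1 / (n + 1)) :
        Tendsto v atTop (𝓝 z) :=
      tendsto_iff_dist_tendsto_zero.2 <| squeeze_zero (fun _ => dist_nonneg)
        (fun n => (hv n).le) tendsto_one_div_add_atTop_nhds_zero_nat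
    exact ⟨φ, hφ, fun n => (hP n).2, u, lim_of_dist_lt fun n => (hu n).1,
      lim_of_dist_lt fun n => (hu n).2⟩

theorem isClosed_setOf_mem_extLimitSet_s10 (y : E) : IsClosed {x | y ∈ extLimitSet T x} := by
  refine isClosed_of_closure_subset fun x hx => ?_
  rw [Metric.mem_closure_iff] at hx
  simp only [Set.mem_ofPred_eq, mem_extLimitSet_iff_s10] at hx ⊢
  intro ε hε
  obtain ⟨x', hx', hxx'⟩ := hx (ε / 2) (half_pos hε)
  refine (hx' (ε / 2) (half_pos hε)).mono fun k ⟨u, hu, hTu⟩ => ⟨u, ?_, by linarith⟩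
  linarith [dist_triangle_right u x x']

theorem smul_mem_extLimitSet (c : ℂ) (h : y ∈ extLimitSet T x) :
    c • y ∈ extLimitSet T (c • x) := by
  obtain ⟨k, hk, hpos, u, hu, hTu⟩ := h
  exact ⟨k, hk, hpos, fun n => c • u n, hu.const_smul c, by
    simpa only [map_smul] using hTu.const_smul c⟩

theorem extLimitSet_smul_eq_univ {c : ℂ} (hc : c ≠ 0) (h : extLimitSet T x = Set.univ) :
    extLimitSet T (c • x) = Set.univ :=
  Set.eq_univ_of_forall fun z => by
    have hz := smul_mem_extLimitSet T c (h ▸ Set.mem_univ (c⁻¹ • z))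
    rwa [smul_inv_smul₀ hc] at hz

end ExtLimitSet

theorem stmt10 (T : ℕ → X →L[ℂ] X) :
    IsClosed {x : X | extLimitSet T x = Set.univ} ∧
      IsPreconnected {x : X | extLimitSet T x = Set.univ} := by
  have hclosed : IsClosed {x : X | extLimitSet T x = Set.univ} := by
    simp only [Set.eq_univ_iff_forall, Set.ofPred_forall]
    exact isClosed_iInter fun y => isClosed_setOf_mem_extLimitSet_s10 T y
  refine ⟨hclosed, hclosed.isPreconnected_of_smul_mem fun x hx t ht => ?_⟩
  rw [Set.mem_ofPred_eq, ← Complex.coe_smul]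
  exact extLimitSet_smul_eq_univ T (Complex.ofReal_ne_zero.2 ht.ne') hx
end

section
/- Let X be a separable Banach space over ℂ, T a bounded linear operator on X, and x ∈ X. If J_T(x) = X, then J_T(Tx) = X. Consequently, for a sequence (T_n)_{n≥1} of bounded linear operators on X, the set A = ⋃_{n≥1} {x ∈ X : J_{T_n}(x) = X} satisfies T_n({x ∈ X : J_{T_n}(x) = X}) ⊆ A for every n. -/
/-!
Dropping one iterate: `T^{k_n} x_n = T^{k_n - 1} (T x_n)` and `T x_n → T x`, so every point of
`J_T(x)` already lies in `J_T(Tx)`.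
-/

open Filter Topology

variable {X : Type*} [NormedAddCommGroup X] [NormedSpace ℂ X] [CompleteSpace X]
  [TopologicalSpace.SeparableSpace X]

/-- The extended limit set `J_T(x)` of a single operator `T`, defined via the iterates
`T^{k_n}`: all `y` such that there exist a strictly increasing sequence of positive
integers `(k_n)` and a sequence `(x_n)` with `x_n → x` and `T^{k_n} x_n → y`. -/
def extLimitSetIter (T : X →L[ℂ] X) (x : X) : Set X :=
  {y | ∃ k : ℕ → ℕ, StrictMono k ∧ (∀ n, 0 < k n) ∧
    ∃ u : ℕ → X, Tendsto u atTop (𝓝 x) ∧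
      Tendsto (fun n => (T ^ (k n)) (u n)) atTop (𝓝 y)}

section

variable {E : Type*} [NormedAddCommGroup E] [NormedSpace ℂ E]

theorem extLimitSetIter_subset_apply (T : E →L[ℂ] E) (x : E) :
    extLimitSetIter T x ⊆ extLimitSetIter T (T x) := by
  rintro y ⟨k, hk, hk_pos, u, hu, hTu⟩
  have two_le : ∀ n, 2 ≤ k (n + 1) := fun n => by
    have := hk_pos 0
    have := hk (show 0 < n + 1 by omega)
    omega
  refine ⟨fun n => k (n + 1) - 1, fun a b hab =>
    Nat.sub_lt_sub_right (one_le_two.trans (two_le a)) (hk (Nat.add_lt_add_right hab 1)),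
    fun n => Nat.sub_pos_of_lt (two_le n),
    fun n => T (u (n + 1)), (T.continuous.tendsto x).comp (hu.comp (tendsto_add_atTop_nat 1)), ?_⟩
  have shift (n : ℕ) : (T ^ (k (n + 1) - 1)) (T (u (n + 1))) = (T ^ k (n + 1)) (u (n + 1)) := by
    conv_rhs => rw [← Nat.sub_add_cancel (one_le_two.trans (two_le n)), pow_succ]
    rfl
  simpa only [shift, Function.comp_def] using hTu.comp (tendsto_add_atTop_nat 1)

theorem extLimitSetIter_apply_eq_univ {T : E →L[ℂ] E} {x : E}
    (hx : extLimitSetIter T x = Set.univ) :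
    extLimitSetIter T (T x) = Set.univ :=
  Set.eq_univ_of_univ_subset (hx ▸ extLimitSetIter_subset_apply T x)

end

theorem stmt12 :
    (∀ (T : X →L[ℂ] X) (x : X),
        extLimitSetIter T x = Set.univ → extLimitSetIter T (T x) = Set.univ) ∧
    (∀ (T : ℕ → X →L[ℂ] X) (n : ℕ), 0 < n →
        T n '' {x : X | extLimitSetIter (T n) x = Set.univ} ⊆
          ⋃ m ∈ {m : ℕ | 0 < m}, {x : X | extLimitSetIter (T m) x = Set.univ}) := by
  refine ⟨fun T x => extLimitSetIter_apply_eq_univ, ?_⟩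
  rintro T n hn _ ⟨x, hx, rfl⟩
  exact Set.mem_biUnion hn (extLimitSetIter_apply_eq_univ hx)
end

section
/- Let X be a separable Banach space over ℂ and (T_n)_{n≥1} a sequence of bounded linear operators on X. Suppose there exists a vector x ∈ X such that J_{(T_n)}(x) has nonempty interior. Then for every sequence of complex numbers (λ_n) with λ_n → 0, the linear span of the union ⋃_{n≥1} Range(T_n − λ_n I) is dense in X. -/
open Filter Topology

variable {X : Type*} [NormedAddCommGroup X] [NormedSpace ℂ X] [CompleteSpace X]
  [TopologicalSpace.SeparableSpace X]

/-! If the span were not dense, a nonzero functional `f` would annihilate every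
`T n z - λ n z`, i.e. `f ∘ T n = λ n f`. Passing to the limit along
`x_n → x`, `T_{k_n} x_n → y` gives `f y = lim λ_{k_n} f(x_n) = 0 · f x = 0`, so `f` vanishes
on `J(x)`; a linear functional vanishing on a set with interior is zero. -/

theorem Submodule.exists_ne_zero_forall_eq_zero_of_not_dense {𝕜 E : Type*} [RCLike 𝕜]
    [NormedAddCommGroup E] [NormedSpace 𝕜 E] (M : Submodule 𝕜 E) (hM : ¬Dense (M : Set E)) :
    ∃ f : StrongDual 𝕜 E, f ≠ 0 ∧ ∀ a ∈ M, f a = 0 := by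
  set S := M.topologicalClosure
  -- makes `E ⧸ S` a normed space, whose dual separates points
  have : IsClosed (S : Set E) := M.isClosed_topologicalClosure
  obtain ⟨x₀, hx₀⟩ : ∃ x₀, x₀ ∉ S := by
    by_contra! h
    exact hM (Submodule.dense_iff_topologicalClosure_eq_top.2 (S.eq_top_iff'.2 h))
  obtain ⟨g, hg⟩ :=
    SeparatingDual.exists_ne_zero (R := 𝕜) (mt (Submodule.Quotient.mk_eq_zero S).1 hx₀)
  refine ⟨g ∘L S.mkQL, fun h ↦ hg ?_, fun a ha ↦ ?_⟩
  · simpa using congrArg (· x₀) h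
  · have : Submodule.Quotient.mk (p := S) a = 0 :=
      (Submodule.Quotient.mk_eq_zero S).2 (M.le_topologicalClosure ha)
    simp [this]

theorem ContinuousLinearMap.eq_zero_of_nonempty_interior_ker {𝕜 E F : Type*}
    [NontriviallyNormedField 𝕜] [AddCommGroup E] [Module 𝕜 E] [TopologicalSpace E]
    [IsTopologicalAddGroup E] [ContinuousSMul 𝕜 E] [AddCommGroup F] [Module 𝕜 F]
    [TopologicalSpace F] (f : E →L[𝕜] F)
    (hf : (interior (LinearMap.ker (f : E →ₗ[𝕜] F) : Set E)).Nonempty) : f = 0 := by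
  have hker := (LinearMap.ker (f : E →ₗ[𝕜] F)).eq_top_of_nonempty_interior' hf
  ext z
  have : z ∈ LinearMap.ker (f : E →ₗ[𝕜] F) := hker ▸ Submodule.mem_top
  simpa using this

theorem extLimitSet_subset_ker {E : Type*} [NormedAddCommGroup E] [NormedSpace ℂ E]
    {T : ℕ → E →L[ℂ] E} {lam : ℕ → ℂ} (hlam : Tendsto lam atTop (𝓝 0)) {f : StrongDual ℂ E}
    (hf : ∀ n, 0 < n → ∀ z, f (T n z) = lam n * f z) (x : E) :
    extLimitSet T x ⊆ LinearMap.ker (f : E →ₗ[ℂ] ℂ) := by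
  rintro y ⟨k, hk, hk_pos, u, hu, hTu⟩
  have hlim : Tendsto (fun n ↦ lam (k n) * f (u n)) atTop (𝓝 (0 * f x)) :=
    (hlam.comp hk.tendsto_atTop).mul ((f.continuous.tendsto x).comp hu)
  have hlim' : Tendsto (fun n ↦ lam (k n) * f (u n)) atTop (𝓝 (f y)) := by
    simpa only [Function.comp_def, hf _ (hk_pos _)] using (f.continuous.tendsto y).comp hTu
  simpa using tendsto_nhds_unique hlim' hlim

theorem stmt15 (T : ℕ → X →L[ℂ] X) (x : X)
    (hint : (interior (extLimitSet T x)).Nonempty)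
    (lam : ℕ → ℂ) (hlam : Tendsto lam atTop (𝓝 0)) :
    Dense (Submodule.span ℂ
      (⋃ n ∈ {n : ℕ | 0 < n}, Set.range fun z : X => T n z - lam n • z) : Set X) := by
  by_contra hdense
  obtain ⟨f, hf_ne, hf_span⟩ := Submodule.exists_ne_zero_forall_eq_zero_of_not_dense _ hdense
  have hf : ∀ n, 0 < n → ∀ z, f (T n z) = lam n * f z := fun n hn z ↦ by
    have := hf_span _ (Submodule.subset_span (Set.mem_biUnion hn ⟨z, rfl⟩))
    rwa [map_sub, map_smul, sub_eq_zero] at this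
  exact hf_ne (f.eq_zero_of_nonempty_interior_ker
    (hint.mono (interior_mono (extLimitSet_subset_ker hlam hf x))))
end
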